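/- Let ω be a walk on ℤ² and a, b boundary edges with associated oriented edges e_a, e_b. If ω is a walk from a_+ to b_+, then the loop-erasure satisfies LE[e_a ⊕ ω ⊕ e_b^R] = e_a ⊕ LE[ω] ⊕ e_b^R, where ⊕ denotes concatenation and e^R denotes edge reversal, provided a_−, b_− lie outside the set visited by ω. -/

import Mathlib

/-- One step of chronological loop erasure: given the path built so far, append
the next vertex, erasing the loop it closes if it has been visited before. -/
def loopEraseStep {α : Type*} [DecidableEq α] (path : List α) (v : α) : List α :=
  if v ∈ path then path.takeWhile (· ≠ v) ++ [v] else path ++ [v]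

/-- Chronological loop erasure of a walk: erase loops in the order they form. -/
def loopErase {α : Type*} [DecidableEq α] (ω : List α) : List α :=
  ω.foldl loopEraseStep []

/-- Nearest-neighbor adjacency on `ℤ²`. -/
def ZZAdj (p q : ℤ × ℤ) : Prop := |p.1 - q.1| + |p.2 - q.2| = 1

section LoopErase

variable {α : Type*} [DecidableEq α]

lemma loopEraseStep_of_not_mem {p : List α} {v : α} (hv : v ∉ p) :
    loopEraseStep p v = p ++ [v] := if_neg hv

lemma mem_loopEraseStep {p : List α} {v x : α} (hx : x ∈ loopEraseStep p v) :
    x ∈ v :: p := by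
  unfold loopEraseStep at hx
  split_ifs at hx
  · rcases List.mem_append.mp hx with h | h
    · exact List.mem_cons_of_mem _ ((List.takeWhile_prefix _).sublist.subset h)
    · exact List.mem_cons.mpr (Or.inl (List.mem_singleton.mp h))
  · simpa [or_comm] using hx

lemma loopEraseStep_cons_of_ne {p : List α} {a v : α} (hav : a ≠ v) :
    loopEraseStep (a :: p) v = a :: loopEraseStep p v := by
  have hmem : v ∈ a :: p ↔ v ∈ p := by simp [Ne.symm hav]
  unfold loopEraseStep
  rw [if_congr hmem rfl rfl]
  split_ifs
  · rw [List.takeWhile_cons_of_pos (by simpa using hav), List.cons_append]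
  · rfl

lemma mem_of_mem_foldl_loopEraseStep {ω p : List α} {x : α}
    (hx : x ∈ ω.foldl loopEraseStep p) : x ∈ p ∨ x ∈ ω := by
  induction ω generalizing p with
  | nil => exact Or.inl hx
  | cons v t ih =>
    rcases ih hx with h | h
    · rcases List.mem_cons.mp (mem_loopEraseStep h) with rfl | h
      · exact Or.inr List.mem_cons_self
      · exact Or.inl h
    · exact Or.inr (List.mem_cons_of_mem _ h)

lemma mem_of_mem_loopErase {ω : List α} {x : α} (hx : x ∈ loopErase ω) : x ∈ ω :=
  (mem_of_mem_foldl_loopEraseStep hx).resolve_left List.not_mem_nil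

lemma foldl_loopEraseStep_cons_of_not_mem {ω : List α} {a : α} (ha : a ∉ ω) (p : List α) :
    ω.foldl loopEraseStep (a :: p) = a :: ω.foldl loopEraseStep p := by
  induction ω generalizing p with
  | nil => rfl
  | cons v t ih =>
    have hav : a ≠ v := fun h => ha (h ▸ List.mem_cons_self)
    rw [List.foldl_cons, List.foldl_cons, loopEraseStep_cons_of_ne hav]
    exact ih (fun h => ha (List.mem_cons_of_mem _ h)) _

lemma loopErase_cons_of_not_mem {ω : List α} {a : α} (ha : a ∉ ω) :
    loopErase (a :: ω) = a :: loopErase ω :=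
  foldl_loopEraseStep_cons_of_not_mem ha []

lemma loopErase_append_singleton_of_not_mem {ω : List α} {b : α} (hb : b ∉ ω) :
    loopErase (ω ++ [b]) = loopErase ω ++ [b] := by
  rw [loopErase, List.foldl_append, List.foldl_cons, List.foldl_nil]
  exact loopEraseStep_of_not_mem fun h => hb (mem_of_mem_loopErase h)

end LoopErase

theorem stmt_19_general (ω : List (ℤ × ℤ)) (am bm : ℤ × ℤ)
    (ham : am ∉ ω) (hbm : bm ∉ ω) (hab : am ≠ bm) :
    loopErase (am :: (ω ++ [bm])) = am :: (loopErase ω ++ [bm]) := by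
  have ham' : am ∉ ω ++ [bm] := by simp [ham, hab]
  rw [loopErase_cons_of_not_mem ham', loopErase_append_singleton_of_not_mem hbm]

/-- Loop erasure commutes with prepending the edge `e_a = [a₋, a₊]` and
appending the reversed edge `e_b^R = [b₊, b₋]`: if `ω` is a nearest-neighbor
walk on `ℤ²` from `a₊` to `b₊` and the outer endpoints `a₋, b₋` are not visited
by `ω` (and `a₋ ≠ b₋`), then
`LE[e_a ⊕ ω ⊕ e_b^R] = e_a ⊕ LE[ω] ⊕ e_b^R`. -/
theorem stmt_19 (ω : List (ℤ × ℤ)) (am ap bm bp : ℤ × ℤ)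
    (hne : ω ≠ [])
    (hhead : ω.head? = some ap) (hlast : ω.getLast? = some bp)
    (hwalk : List.Chain' ZZAdj (am :: (ω ++ [bm])))
    (ham : am ∉ ω) (hbm : bm ∉ ω) (hab : am ≠ bm) :
    loopErase (am :: (ω ++ [bm])) = am :: (loopErase ω ++ [bm]) :=
  stmt_19_general ω am bm ham hbm hab
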